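/- Assume λ + μ² ≠ 0. Let P, Q, R, S be a pqrs-quad and define the C-difference functions E_P(w) = P(−w) + (λ+μ²)⁻¹·e^{2(1−ℓ)w}·(μ·e^{2w}·R(w) + S(w)), E_Q(w) = Q(−w) + (λ+μ²)⁻¹·e^{−2ℓw}·(λ·e^{2w}·R(w) − μ·S(w)), E_R(w) = R(−w) + e^{2(1−ℓ)w}·(μ·e^{2w}·P(w) + Q(w)), E_S(w) = S(−w) + e^{−2ℓw}·(λ·e^{2w}·P(w) − μ·Q(w)). Then for every w ∈ ℂ: e^w·E_P′(w) = −e^w·(ℓ−1+μe^w)·E_P(w) + e^{2w}·E_Q(w) − E_R(w); e^{2w}·E_Q′(w) = ((ℓ+1)μ − λe^w)·E_P(w) − μe^w·E_Q(w) − e^w·E_S(w); e^w·E_R′(w) = (λ+μ²)·e^{2w}·E_P(w) + (μ + 2(1−ℓ)e^w)·E_R(w) + e^{2w}·E_S(w); e^{2w}·E_S′(w) = (λ+μ²)·e^{3w}·E_Q(w) + ((ℓ+1)μ − λe^w)·E_R(w) + e^{2w}·(1−ℓ+μe^w)·E_S(w). -/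

import Mathlib

/-! Each C-difference function is `X (-w)` plus a combination of `P, Q, R, S` at `w` with
coefficients `e^{kw}` and `e^{-2ℓw}`. After differentiating, the pqrs system at `-w` and at `w`
eliminates all derivatives, and each identity becomes a rational identity in `e^w`, `e^{-2ℓw}` and
the values of the quad at `±w`, with denominators `e^w` and `λ + μ²`. -/

noncomputable def EP (ell lam mu : ℂ) (P Q R S : ℂ → ℂ) : ℂ → ℂ := fun w =>
  P (-w) + (lam + mu ^ 2)⁻¹ * Complex.exp (2 * (1 - ell) * w) *
    (mu * Complex.exp (2 * w) * R w + S w)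

noncomputable def EQ (ell lam mu : ℂ) (P Q R S : ℂ → ℂ) : ℂ → ℂ := fun w =>
  Q (-w) + (lam + mu ^ 2)⁻¹ * Complex.exp (-(2 * ell) * w) *
    (lam * Complex.exp (2 * w) * R w - mu * S w)

noncomputable def ER (ell lam mu : ℂ) (P Q R S : ℂ → ℂ) : ℂ → ℂ := fun w =>
  R (-w) + Complex.exp (2 * (1 - ell) * w) * (mu * Complex.exp (2 * w) * P w + Q w)

noncomputable def ES (ell lam mu : ℂ) (P Q R S : ℂ → ℂ) : ℂ → ℂ := fun w =>
  S (-w) + Complex.exp (-(2 * ell) * w) * (lam * Complex.exp (2 * w) * P w - mu * Q w)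

namespace Complex

theorem exp_two_mul (w : ℂ) : exp (2 * w) = exp w ^ 2 := by
  exact_mod_cast exp_nat_mul w 2

theorem exp_three_mul (w : ℂ) : exp (3 * w) = exp w ^ 3 := by
  exact_mod_cast exp_nat_mul w 3

theorem exp_two_mul_one_sub_mul (ell w : ℂ) :
    exp (2 * (1 - ell) * w) = exp (-(2 * ell) * w) * exp w ^ 2 := by
  rw [← exp_two_mul, ← exp_add]
  ring_nf

theorem deriv_eq_exp_neg_mul {f g : ℂ → ℂ} (h : ∀ w, exp w * deriv f w = g w) (w : ℂ) :
    deriv f w = exp (-w) * g w := by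
  rw [← h w, exp_neg, inv_mul_cancel_left₀ (exp_ne_zero w)]

end Complex

open Complex

structure IsPQRSQuad (ell lam mu : ℂ) (P Q R S : ℂ → ℂ) : Prop where
  differentiable_P : Differentiable ℂ P
  differentiable_Q : Differentiable ℂ Q
  differentiable_R : Differentiable ℂ R
  differentiable_S : Differentiable ℂ S
  exp_mul_deriv_P : ∀ w, exp w * deriv P w =
    (mu + (ell - 1) * exp w) * P w - Q w + exp (2 * w) * R w
  deriv_Q : ∀ w, deriv Q w = exp w * ((lam - (ell + 1) * mu * exp w) * P w + mu * Q w + S w)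
  exp_mul_deriv_R : ∀ w, exp w * deriv R w =
    -(lam + mu ^ 2) * P w + exp w * (2 * (ell - 1) - mu * exp w) * R w - S w
  exp_mul_deriv_S : ∀ w, exp w * deriv S w =
    -(lam + mu ^ 2) * Q w + exp (2 * w) * (lam - (ell + 1) * mu * exp w) * R w
      + ((ell - 1) * exp w - mu) * S w

namespace IsPQRSQuad

variable {ell lam mu : ℂ} {P Q R S : ℂ → ℂ}

theorem exp_mul_deriv_EP (h : IsPQRSQuad ell lam mu P Q R S) (hne : lam + mu ^ 2 ≠ 0) (w : ℂ) :
    exp w * deriv (EP ell lam mu P Q R S) w =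
      -exp w * (ell - 1 + mu * exp w) * EP ell lam mu P Q R S w +
        exp (2 * w) * EQ ell lam mu P Q R S w - ER ell lam mu P Q R S w := by
  have hd : deriv (EP ell lam mu P Q R S) w = _ :=
    (((h.differentiable_P (-w)).hasDerivAt.comp w (hasDerivAt_neg' w)).add
      ((((hasDerivAt_id' w).const_mul (2 * (1 - ell))).cexp.const_mul (lam + mu ^ 2)⁻¹).mul
        (((((hasDerivAt_id' w).const_mul 2).cexp.const_mul mu).mul
          (h.differentiable_R w).hasDerivAt).add (h.differentiable_S w).hasDerivAt))).deriv
  rw [hd, deriv_eq_exp_neg_mul h.exp_mul_deriv_P, deriv_eq_exp_neg_mul h.exp_mul_deriv_R,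
    deriv_eq_exp_neg_mul h.exp_mul_deriv_S]
  simp only [EP, EQ, ER, neg_neg, exp_neg, exp_two_mul, exp_two_mul_one_sub_mul, mul_neg,
    Pi.add_apply, Pi.mul_apply]
  field_simp
  ring

theorem exp_two_mul_deriv_EQ (h : IsPQRSQuad ell lam mu P Q R S) (hne : lam + mu ^ 2 ≠ 0)
    (w : ℂ) :
    exp (2 * w) * deriv (EQ ell lam mu P Q R S) w =
      ((ell + 1) * mu - lam * exp w) * EP ell lam mu P Q R S w -
        mu * exp w * EQ ell lam mu P Q R S w - exp w * ES ell lam mu P Q R S w := by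
  have hd : deriv (EQ ell lam mu P Q R S) w = _ :=
    (((h.differentiable_Q (-w)).hasDerivAt.comp w (hasDerivAt_neg' w)).add
      ((((hasDerivAt_id' w).const_mul (-(2 * ell))).cexp.const_mul (lam + mu ^ 2)⁻¹).mul
        (((((hasDerivAt_id' w).const_mul 2).cexp.const_mul lam).mul
          (h.differentiable_R w).hasDerivAt).sub
            ((h.differentiable_S w).hasDerivAt.const_mul mu)))).deriv
  rw [hd, h.deriv_Q, deriv_eq_exp_neg_mul h.exp_mul_deriv_R,
    deriv_eq_exp_neg_mul h.exp_mul_deriv_S]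
  simp only [EP, EQ, ES, exp_neg, exp_two_mul, exp_two_mul_one_sub_mul, mul_neg,
    Pi.sub_apply, Pi.mul_apply]
  field_simp
  ring

theorem exp_mul_deriv_ER (h : IsPQRSQuad ell lam mu P Q R S) (hne : lam + mu ^ 2 ≠ 0) (w : ℂ) :
    exp w * deriv (ER ell lam mu P Q R S) w =
      (lam + mu ^ 2) * exp (2 * w) * EP ell lam mu P Q R S w +
        (mu + 2 * (1 - ell) * exp w) * ER ell lam mu P Q R S w +
        exp (2 * w) * ES ell lam mu P Q R S w := by
  have hd : deriv (ER ell lam mu P Q R S) w = _ :=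
    (((h.differentiable_R (-w)).hasDerivAt.comp w (hasDerivAt_neg' w)).add
      (((hasDerivAt_id' w).const_mul (2 * (1 - ell))).cexp.mul
        (((((hasDerivAt_id' w).const_mul 2).cexp.const_mul mu).mul
          (h.differentiable_P w).hasDerivAt).add (h.differentiable_Q w).hasDerivAt))).deriv
  rw [hd, deriv_eq_exp_neg_mul h.exp_mul_deriv_R, deriv_eq_exp_neg_mul h.exp_mul_deriv_P,
    h.deriv_Q]
  simp only [EP, ER, ES, neg_neg, exp_neg, exp_two_mul, exp_two_mul_one_sub_mul, mul_neg,
    Pi.add_apply, Pi.mul_apply]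
  field_simp
  ring

theorem exp_two_mul_deriv_ES (h : IsPQRSQuad ell lam mu P Q R S) (hne : lam + mu ^ 2 ≠ 0)
    (w : ℂ) :
    exp (2 * w) * deriv (ES ell lam mu P Q R S) w =
      (lam + mu ^ 2) * exp (3 * w) * EQ ell lam mu P Q R S w +
        ((ell + 1) * mu - lam * exp w) * ER ell lam mu P Q R S w +
        exp (2 * w) * (1 - ell + mu * exp w) * ES ell lam mu P Q R S w := by
  have hd : deriv (ES ell lam mu P Q R S) w = _ :=
    (((h.differentiable_S (-w)).hasDerivAt.comp w (hasDerivAt_neg' w)).add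
      (((hasDerivAt_id' w).const_mul (-(2 * ell))).cexp.mul
        (((((hasDerivAt_id' w).const_mul 2).cexp.const_mul lam).mul
          (h.differentiable_P w).hasDerivAt).sub
            ((h.differentiable_Q w).hasDerivAt.const_mul mu)))).deriv
  rw [hd, deriv_eq_exp_neg_mul h.exp_mul_deriv_S, deriv_eq_exp_neg_mul h.exp_mul_deriv_P,
    h.deriv_Q]
  simp only [EQ, ER, ES, neg_neg, exp_neg, exp_two_mul, exp_three_mul, exp_two_mul_one_sub_mul,
    mul_neg, Pi.sub_apply, Pi.mul_apply]
  field_simp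
  ring

end IsPQRSQuad

theorem statement_16 (ell lam mu : ℂ) (hne : lam + mu ^ 2 ≠ 0) (P Q R S : ℂ → ℂ)
    (hP : Differentiable ℂ P) (hQ : Differentiable ℂ Q)
    (hR : Differentiable ℂ R) (hS : Differentiable ℂ S)
    (hsys1 : ∀ w : ℂ, Complex.exp w * deriv P w =
      (mu + (ell - 1) * Complex.exp w) * P w - Q w + Complex.exp (2 * w) * R w)
    (hsys2 : ∀ w : ℂ, deriv Q w =
      Complex.exp w * ((lam - (ell + 1) * mu * Complex.exp w) * P w + mu * Q w + S w))
    (hsys3 : ∀ w : ℂ, Complex.exp w * deriv R w =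
      -(lam + mu ^ 2) * P w + Complex.exp w * (2 * (ell - 1) - mu * Complex.exp w) * R w - S w)
    (hsys4 : ∀ w : ℂ, Complex.exp w * deriv S w =
      -(lam + mu ^ 2) * Q w + Complex.exp (2 * w) * (lam - (ell + 1) * mu * Complex.exp w) * R w
        + ((ell - 1) * Complex.exp w - mu) * S w) :
    ∀ w : ℂ,
      Complex.exp w * deriv (EP ell lam mu P Q R S) w =
        -(Complex.exp w) * (ell - 1 + mu * Complex.exp w) * EP ell lam mu P Q R S w +
          Complex.exp (2 * w) * EQ ell lam mu P Q R S w - ER ell lam mu P Q R S w ∧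
      Complex.exp (2 * w) * deriv (EQ ell lam mu P Q R S) w =
        ((ell + 1) * mu - lam * Complex.exp w) * EP ell lam mu P Q R S w -
          mu * Complex.exp w * EQ ell lam mu P Q R S w -
          Complex.exp w * ES ell lam mu P Q R S w ∧
      Complex.exp w * deriv (ER ell lam mu P Q R S) w =
        (lam + mu ^ 2) * Complex.exp (2 * w) * EP ell lam mu P Q R S w +
          (mu + 2 * (1 - ell) * Complex.exp w) * ER ell lam mu P Q R S w +
          Complex.exp (2 * w) * ES ell lam mu P Q R S w ∧
      Complex.exp (2 * w) * deriv (ES ell lam mu P Q R S) w =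
        (lam + mu ^ 2) * Complex.exp (3 * w) * EQ ell lam mu P Q R S w +
          ((ell + 1) * mu - lam * Complex.exp w) * ER ell lam mu P Q R S w +
          Complex.exp (2 * w) * (1 - ell + mu * Complex.exp w) * ES ell lam mu P Q R S w := by
  have h : IsPQRSQuad ell lam mu P Q R S := ⟨hP, hQ, hR, hS, hsys1, hsys2, hsys3, hsys4⟩
  exact fun w => ⟨h.exp_mul_deriv_EP hne w, h.exp_two_mul_deriv_EQ hne w,
    h.exp_mul_deriv_ER hne w, h.exp_two_mul_deriv_ES hne w⟩
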